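/- arXiv:1610.03858 — 2 statements merged into one kernel-verified Lean document; each statement's English description precedes it below -/
import Mathlib

section
/- Let n be a natural number, let C be a closed cone in ℝⁿ (i.e., C is topologically closed and t·z ∈ C whenever z ∈ C and t ≥ 0), and let ℓ : ℝⁿ → ℝ be a linear map such that ℓ(z) > 0 for every z ∈ C with z ≠ 0. Then for every real number M ≥ 0, the set of lattice points { z ∈ C ∩ ℤⁿ : ℓ(z) ≤ M } is finite, where ℤⁿ denotes the set of points of ℝⁿ all of whose coordinates are integers. -/
/-!
On the compact set `C ∩ sphere 0 1` the continuous function `ℓ` is positive, hence bounded below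
by some `ε > 0`; by homogeneity `ε ‖z‖ ≤ ℓ z` on all of `C`. So `{z ∈ C | ℓ z ≤ M}` is bounded,
and a bounded set meets the discrete closed lattice `ℤⁿ` in finitely many points.
-/

open Bornology Metric Submodule

section ClosedCone

variable {E : Type*} [NormedAddCommGroup E] [NormedSpace ℝ E] [FiniteDimensional ℝ E]
  {C : Set E} (hC_closed : IsClosed C) (hC_cone : ∀ z ∈ C, ∀ t : ℝ, 0 ≤ t → t • z ∈ C)
  {ℓ : E →ₗ[ℝ] ℝ} (hpos : ∀ z ∈ C, z ≠ 0 → 0 < ℓ z)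
include hC_closed hC_cone hpos

theorem exists_pos_mul_norm_le_of_isClosed_cone : ∃ ε > 0, ∀ z ∈ C, ε * ‖z‖ ≤ ℓ z := by
  have hcompact : IsCompact (C ∩ sphere 0 1) := (isCompact_sphere 0 1).inter_left hC_closed
  obtain ⟨ε, hε, hmin⟩ := hcompact.exists_forall_le' ℓ.continuous_of_finiteDimensional.continuousOn
    fun u hu ↦ hpos u hu.1 (ne_zero_of_mem_unit_sphere ⟨u, hu.2⟩)
  refine ⟨ε, hε, fun z hz ↦ ?_⟩
  rcases eq_or_ne z 0 with rfl | hz0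
  · simp
  have hnorm : 0 < ‖z‖ := norm_pos_iff.mpr hz0
  have hunit : ‖z‖⁻¹ • z ∈ C ∩ sphere 0 1 :=
    ⟨hC_cone z hz _ (inv_nonneg.mpr hnorm.le), by simp [norm_smul, hnorm.ne']⟩
  have hℓ := hmin _ hunit
  rwa [map_smul, smul_eq_mul, le_inv_mul_iff₀ hnorm, mul_comm] at hℓ

theorem isBounded_cone_inter_sublevel (M : ℝ) : IsBounded {z ∈ C | ℓ z ≤ M} := by
  obtain ⟨ε, hε, hbound⟩ := exists_pos_mul_norm_le_of_isClosed_cone hC_closed hC_cone hpos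
  refine isBounded_closedBall (x := 0) (r := M / ε) |>.subset fun z ⟨hz, hzM⟩ ↦ ?_
  rw [mem_closedBall_zero_iff, le_div_iff₀ hε, mul_comm]
  exact (hbound z hz).trans hzM

theorem finite_cone_inter_sublevel_inter_span {ι : Type*} [Finite ι] (b : Module.Basis ι ℝ E)
    (M : ℝ) : ({z ∈ C | ℓ z ≤ M} ∩ span ℤ (Set.range b)).Finite :=
  ZSpan.setFinite_inter b (isBounded_cone_inter_sublevel hC_closed hC_cone hpos M)

end ClosedCone

theorem EuclideanSpace.mem_span_int_basisFun_iff {ι : Type*} [Fintype ι]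
    (z : EuclideanSpace ℝ ι) :
    z ∈ span ℤ (Set.range (EuclideanSpace.basisFun ι ℝ).toBasis) ↔
      ∀ i, ∃ k : ℤ, z i = k := by
  rw [Module.Basis.mem_span_iff_repr_mem]
  simp [eq_comm]

theorem finite_lattice_points_in_sublevel_general
    (n : ℕ) (C : Set (EuclideanSpace ℝ (Fin n)))
    (hC_closed : IsClosed C)
    (hC_cone : ∀ z ∈ C, ∀ t : ℝ, 0 ≤ t → t • z ∈ C)
    (ℓ : EuclideanSpace ℝ (Fin n) →ₗ[ℝ] ℝ)
    (hpos : ∀ z ∈ C, z ≠ 0 → 0 < ℓ z)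
    (M : ℝ) :
    {z : EuclideanSpace ℝ (Fin n) |
      z ∈ C ∧ (∀ i : Fin n, ∃ k : ℤ, z i = (k : ℝ)) ∧ ℓ z ≤ M}.Finite :=
  (finite_cone_inter_sublevel_inter_span hC_closed hC_cone hpos
    (EuclideanSpace.basisFun (Fin n) ℝ).toBasis M).subset
    fun z ⟨hz, hlattice, hzM⟩ ↦
      ⟨⟨hz, hzM⟩, (EuclideanSpace.mem_span_int_basisFun_iff z).mpr hlattice⟩

/-- Lattice points in a sublevel set of a positive linear functional on a closed
cone in ℝⁿ form a finite set. -/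
theorem finite_lattice_points_in_sublevel
    (n : ℕ) (C : Set (EuclideanSpace ℝ (Fin n)))
    (hC_closed : IsClosed C)
    (hC_cone : ∀ z ∈ C, ∀ t : ℝ, 0 ≤ t → t • z ∈ C)
    (ℓ : EuclideanSpace ℝ (Fin n) →ₗ[ℝ] ℝ)
    (hpos : ∀ z ∈ C, z ≠ 0 → 0 < ℓ z)
    (M : ℝ) (hM : 0 ≤ M) :
    {z : EuclideanSpace ℝ (Fin n) |
      z ∈ C ∧ (∀ i : Fin n, ∃ k : ℤ, z i = (k : ℝ)) ∧ ℓ z ≤ M}.Finite :=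
  finite_lattice_points_in_sublevel_general n C hC_closed hC_cone ℓ hpos M
end

section
/- Let F be an algebraically closed field, let K be a field equipped with an F-algebra structure (so that the structure map F → K is an injective ring homomorphism), and let σ : K → K be an F-algebra homomorphism. Suppose there exist an integer m ≥ 1 and an element f ∈ K such that σ^m(f) = f (where σ^m denotes the m-fold composition of σ) and f does not lie in the image of F in K. Then there exists an element g ∈ K not lying in the image of F in K such that σ(g) = g. -/
/-!
If `σ^[m] f = f`, the polynomial `∏_{i<m} (X - σ^[i] f)` is permuted factorwise by `σ`, so its
coefficients are `σ`-fixed. Were they all constants, `f` would be integral over the algebraically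
closed field `F`, hence constant.
-/

open Polynomial Finset

theorem Finset.prod_range_succ_eq_of_eq {M : Type*} [CommMonoid M] {g : ℕ → M} {m : ℕ}
    (h : g m = g 0) : ∏ i ∈ range m, g (i + 1) = ∏ i ∈ range m, g i := by
  cases m with
  | zero => rfl
  | succ k => rw [prod_range_succ, prod_range_succ' g, h]

theorem IsIntegral.of_monic_of_coeff_mem_range {R A : Type*} [CommRing R] [CommRing A]
    [Algebra R A] {p : A[X]} (hp : p.Monic)
    (hcoeff : ∀ n, p.coeff n ∈ Set.range (algebraMap R A)) {x : A} (hx : p.eval x = 0) :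
    IsIntegral R x := by
  obtain ⟨q, hq, -, hq_monic⟩ :=
    lifts_and_natDegree_eq_and_monic ((lifts_iff_coeff_lifts p).2 hcoeff) hp
  exact ⟨q, hq_monic, by rw [eval₂_eq_eval_map, hq, hx]⟩

theorem IsIntegral.mem_range_algebraMap_of_isAlgClosed {F K : Type*} [Field F] [IsAlgClosed F]
    [Ring K] [IsDomain K] [Algebra F K] {x : K} (hx : IsIntegral F x) :
    x ∈ Set.range (algebraMap F K) :=
  minpoly.mem_range_of_degree_eq_one F x <|
    IsAlgClosed.degree_eq_one_of_irreducible F (minpoly.irreducible hx)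

namespace Polynomial

variable {R : Type*} [CommRing R]

noncomputable def orbitPoly (σ : R → R) (x : R) (m : ℕ) : R[X] :=
  ∏ i ∈ range m, (X - C (σ^[i] x))

theorem monic_orbitPoly (σ : R → R) (x : R) (m : ℕ) : (orbitPoly σ x m).Monic :=
  monic_prod_of_monic _ _ fun _ _ => monic_X_sub_C _

theorem eval_self_orbitPoly (σ : R → R) (x : R) {m : ℕ} (hm : 0 < m) :
    (orbitPoly σ x m).eval x = 0 := by
  rw [orbitPoly, eval_prod]
  exact prod_eq_zero (mem_range.2 hm) (by simp)

theorem map_orbitPoly (σ : R →+* R) {x : R} {m : ℕ} (hx : σ^[m] x = x) :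
    (orbitPoly σ x m).map σ = orbitPoly σ x m := by
  simp only [orbitPoly, Polynomial.map_prod, Polynomial.map_sub, map_X, map_C,
    ← Function.iterate_succ_apply' σ]
  exact prod_range_succ_eq_of_eq (g := fun i => X - C (σ^[i] x)) (by rw [hx]; rfl)

theorem coeff_orbitPoly_fixed (σ : R →+* R) {x : R} {m : ℕ} (hx : σ^[m] x = x) (n : ℕ) :
    σ ((orbitPoly σ x m).coeff n) = (orbitPoly σ x m).coeff n := by
  rw [← coeff_map, map_orbitPoly σ hx]

end Polynomial

theorem exists_nonconstant_fixed_of_iterate_fixed_general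
    (F K : Type*) [Field F] [IsAlgClosed F] [Field K] [Algebra F K]
    (σ : K →ₐ[F] K)
    (m : ℕ) (hm : 1 ≤ m) (f : K)
    (hfix : (⇑σ)^[m] f = f)
    (hf : f ∉ Set.range (algebraMap F K)) :
    ∃ g : K, g ∉ Set.range (algebraMap F K) ∧ σ g = g := by
  by_contra! hconst
  have hcoeff (n : ℕ) : (orbitPoly σ f m).coeff n ∈ Set.range (algebraMap F K) :=
    of_not_not fun hn => hconst _ hn (coeff_orbitPoly_fixed σ.toRingHom hfix n)
  exact hf (IsIntegral.of_monic_of_coeff_mem_range (monic_orbitPoly σ f m) hcoeff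
    (eval_self_orbitPoly σ f hm)).mem_range_algebraMap_of_isAlgClosed

/-- Lemma 2.1 (algebraic core): if an F-algebra endomorphism σ of a field K
fixes some non-constant element after m iterations, then σ itself fixes a
non-constant element. -/
theorem exists_nonconstant_fixed_of_iterate_fixed
    (F K : Type*) [Field F] [IsAlgClosed F] [Field K] [Algebra F K]
    (hinj : Function.Injective (algebraMap F K))
    (σ : K →ₐ[F] K)
    (m : ℕ) (hm : 1 ≤ m) (f : K)
    (hfix : (⇑σ)^[m] f = f)
    (hf : f ∉ Set.range (algebraMap F K)) :
    ∃ g : K, g ∉ Set.range (algebraMap F K) ∧ σ g = g :=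
  exists_nonconstant_fixed_of_iterate_fixed_general F K σ m hm f hfix hf
end
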